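/- For a convex body K ⊂ ℝ^d, the first intrinsic volume satisfies V₁(K) ≤ (d·κ_d/κ_{d−1})·R(K), i.e., κ_d·R(K) ≥ W_{d−1}(K), with equality for non-singleton K if and only if K is a Euclidean ball. -/

import Mathlib

open Real Metric Set Pointwise
open scoped Classical
noncomputable section

/-- The circumradius of a subset of `d`-dimensional Euclidean space. -/
def circumrad (d : ℕ) (K : Set (EuclideanSpace ℝ (Fin d))) : ℝ :=
  sInf {ρ : ℝ | 0 ≤ ρ ∧ ∃ t : EuclideanSpace ℝ (Fin d), K ⊆ closedBall t ρ}

/-- κ_d : the volume of the Euclidean unit ball in dimension `d`. -/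
def unitBallVol (d : ℕ) : ℝ :=
  (MeasureTheory.volume (closedBall (0 : EuclideanSpace ℝ (Fin d)) 1)).toReal

/-- The support function of `K`. -/
def suppFn (d : ℕ) (K : Set (EuclideanSpace ℝ (Fin d))) (x : EuclideanSpace ℝ (Fin d)) : ℝ :=
  sSup ((fun y => (inner ℝ x y : ℝ)) '' K)

/-- The `(d-1)`-st quermassintegral `W_{d-1}` of `K`, defined via the Cauchy-type formula
`W_{d-1}(K) = (1/d) ∫_{S^{d-1}} h_K`, rewritten as an integral over the unit ball using
homogeneity of the support function. It satisfies `W_{d-1}(B^d) = κ_d`. -/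
def quermass (d : ℕ) (K : Set (EuclideanSpace ℝ (Fin d))) : ℝ :=
  ((d + 1 : ℝ) / d) * ∫ x in closedBall (0 : EuclideanSpace ℝ (Fin d)) 1, suppFn d K x

section StmtAux

open MeasureTheory

variable {d : ℕ} {K : Set (EuclideanSpace ℝ (Fin d))}

lemma aux14_suppFn_closedBall (c : EuclideanSpace ℝ (Fin d)) {r : ℝ} (hr : 0 ≤ r)
    (x : EuclideanSpace ℝ (Fin d)) :
    suppFn d (closedBall c r) x = inner ℝ x c + r * ‖x‖ := by
  apply IsGreatest.csSup_eq
  constructor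
  · by_cases hx : x = 0
    · refine ⟨c, mem_closedBall_self hr, ?_⟩
      simp [hx]
    · refine ⟨c + (r / ‖x‖) • x, ?_, ?_⟩
      · have h : ‖x‖ ≠ 0 := norm_ne_zero_iff.2 hx
        simp only [mem_closedBall, dist_eq_norm, add_sub_cancel_left, norm_smul]
        rw [Real.norm_eq_abs, abs_div, abs_of_nonneg hr, abs_of_nonneg (norm_nonneg x)]
        field_simp
        exact le_rfl
      · have h : ‖x‖ ≠ 0 := norm_ne_zero_iff.2 hx
        show (inner ℝ x (c + (r / ‖x‖) • x) : ℝ) = _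
        rw [inner_add_right, real_inner_smul_right, real_inner_self_eq_norm_sq, sq]
        field_simp
  · rintro _ ⟨y, hy, rfl⟩
    have h1 : (inner ℝ x y : ℝ) = inner ℝ x c + inner ℝ x (y - c) := by
      rw [← inner_add_right]; congr 1; abel
    show (inner ℝ x y : ℝ) ≤ _
    rw [h1]
    gcongr
    calc (inner ℝ x (y - c) : ℝ) ≤ ‖x‖ * ‖y - c‖ := real_inner_le_norm _ _
      _ ≤ ‖x‖ * r := by
          gcongr
          rw [← dist_eq_norm]; exact mem_closedBall.1 hy
      _ = r * ‖x‖ := mul_comm _ _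

lemma aux14_bddAbove_inner_image {M : ℝ} (hM : ∀ y ∈ K, ‖y‖ ≤ M) (x : EuclideanSpace ℝ (Fin d)) :
    BddAbove ((fun y => (inner ℝ x y : ℝ)) '' K) := by
  refine ⟨‖x‖ * M, ?_⟩
  rintro _ ⟨y, hy, rfl⟩
  calc (inner ℝ x y : ℝ) ≤ ‖x‖ * ‖y‖ := real_inner_le_norm _ _
    _ ≤ ‖x‖ * M := by gcongr; exact hM y hy

lemma aux14_suppFn_le_of_subset_ball (hne : K.Nonempty) {t : EuclideanSpace ℝ (Fin d)} {R : ℝ}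
    (hsub : K ⊆ closedBall t R) (x : EuclideanSpace ℝ (Fin d)) :
    suppFn d K x ≤ inner ℝ x t + R * ‖x‖ := by
  apply csSup_le (hne.image _)
  rintro _ ⟨y, hy, rfl⟩
  have h1 : (inner ℝ x y : ℝ) = inner ℝ x t + inner ℝ x (y - t) := by
    rw [← inner_add_right]; congr 1; abel
  show (inner ℝ x y : ℝ) ≤ _
  rw [h1]
  gcongr
  calc (inner ℝ x (y - t) : ℝ) ≤ ‖x‖ * ‖y - t‖ := real_inner_le_norm _ _
    _ ≤ ‖x‖ * R := by gcongr; rw [← dist_eq_norm]; exact hsub hy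
    _ = R * ‖x‖ := mul_comm _ _

lemma aux14_le_suppFn (x : EuclideanSpace ℝ (Fin d)) (hM : BddAbove ((fun y => (inner ℝ x y : ℝ)) '' K))
    {y : EuclideanSpace ℝ (Fin d)} (hy : y ∈ K) : (inner ℝ x y : ℝ) ≤ suppFn d K x :=
  le_csSup hM ⟨y, hy, rfl⟩

lemma aux14_suppFn_lipschitz (hne : K.Nonempty) {M : ℝ} (hM : ∀ y ∈ K, ‖y‖ ≤ M) :
    LipschitzWith (Real.toNNReal M) (suppFn d K) := by
  have hM0 : 0 ≤ M := le_trans (norm_nonneg _) (hM _ hne.choose_spec)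
  apply LipschitzWith.of_dist_le_mul
  intro x x'
  have aux14_key : ∀ u v : EuclideanSpace ℝ (Fin d), suppFn d K u - suppFn d K v ≤ M * dist u v := by
    intro u v
    rw [sub_le_iff_le_add]
    apply csSup_le (hne.image _)
    rintro _ ⟨y, hy, rfl⟩
    have : (inner ℝ u y : ℝ) = inner ℝ v y + inner ℝ (u - v) y := by
      rw [← inner_add_left]; congr 1; abel
    show (inner ℝ u y : ℝ) ≤ _
    rw [this, add_comm]
    gcongr
    · calc (inner ℝ (u-v) y : ℝ) ≤ ‖u - v‖ * ‖y‖ := real_inner_le_norm _ _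
        _ ≤ dist u v * M := by
            rw [dist_eq_norm]
            exact mul_le_mul le_rfl (hM y hy) (norm_nonneg _) (norm_nonneg _)
        _ = M * dist u v := mul_comm _ _
    · exact le_csSup (aux14_bddAbove_inner_image hM v) ⟨y, hy, rfl⟩
  rw [Real.coe_toNNReal _ hM0, Real.dist_eq, abs_sub_le_iff]
  constructor
  · simpa [dist_comm] using aux14_key x x'
  · simpa [dist_comm x x'] using aux14_key x' x

lemma aux14_suppFn_smul (hne : K.Nonempty) {M : ℝ} (hM : ∀ y ∈ K, ‖y‖ ≤ M) {c : ℝ} (hc : 0 < c)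
    (x : EuclideanSpace ℝ (Fin d)) : suppFn d K (c • x) = c * suppFn d K x := by
  apply le_antisymm
  · apply csSup_le (hne.image _)
    rintro _ ⟨y, hy, rfl⟩
    show (inner ℝ (c • x) y : ℝ) ≤ _
    rw [real_inner_smul_left]
    exact mul_le_mul_of_nonneg_left (aux14_le_suppFn x (aux14_bddAbove_inner_image hM x) hy) hc.le
  · rw [mul_comm, ← le_div_iff₀ hc]
    apply csSup_le (hne.image _)
    rintro _ ⟨y, hy, rfl⟩
    rw [le_div_iff₀ hc, mul_comm]
    show c * (inner ℝ x y : ℝ) ≤ _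
    rw [← real_inner_smul_left]
    exact aux14_le_suppFn (c • x) (aux14_bddAbove_inner_image hM (c • x)) hy

lemma aux14_mem_of_forall_inner_le (hcp : IsCompact K) (hcv : Convex ℝ K) (hne : K.Nonempty)
    {p : EuclideanSpace ℝ (Fin d)} (hp : ∀ x, (inner ℝ x p : ℝ) ≤ suppFn d K x) : p ∈ K := by
  by_contra hpK
  obtain ⟨f, u, hfu, hup⟩ := geometric_hahn_banach_closed_point hcv hcp.isClosed hpK
  set x := (InnerProductSpace.toDual ℝ (EuclideanSpace ℝ (Fin d))).symm f with hx
  have hfx : ∀ y, f y = (inner ℝ x y : ℝ) := fun y =>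
    (InnerProductSpace.toDual_symm_apply (𝕜 := ℝ)).symm
  have h1 : suppFn d K x ≤ u := by
    apply csSup_le (hne.image _)
    rintro _ ⟨y, hy, rfl⟩
    exact le_of_lt (show (inner ℝ x y : ℝ) < u by rw [← hfx]; exact hfu y hy)
  have h2 := hp x
  rw [← hfx] at h2
  linarith

lemma aux14_exists_circumcenter (hne : K.Nonempty) (hcp : IsCompact K) :
    0 ≤ circumrad d K ∧ ∃ t, K ⊆ closedBall t (circumrad d K) := by
  obtain ⟨y₀, hy₀⟩ := hne
  set f : EuclideanSpace ℝ (Fin d) → ℝ := fun t => sSup ((fun y => dist t y) '' K) with hf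
  have hbdd : ∀ t, BddAbove ((fun y => dist t y) '' K) := fun t =>
    (hcp.image (Continuous.dist continuous_const continuous_id)).bddAbove
  have hfle : ∀ t ρ, K ⊆ closedBall t ρ ↔ f t ≤ ρ := by
    intro t ρ
    constructor
    · intro h
      exact csSup_le ((Set.nonempty_of_mem hy₀).image _)
        (by rintro _ ⟨y, hy, rfl⟩; show dist t y ≤ ρ; rw [dist_comm]; exact h hy)
    · intro h y hy
      rw [mem_closedBall, dist_comm]
      exact le_trans (le_csSup (hbdd t) ⟨y, hy, rfl⟩) h
  have hf0 : ∀ t, 0 ≤ f t := fun t =>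
    le_trans dist_nonneg (le_csSup (hbdd t) ⟨y₀, hy₀, rfl⟩)
  have hlip : ∀ t t', f t ≤ f t' + dist t t' := by
    intro t t'
    apply csSup_le ((Set.nonempty_of_mem hy₀).image _)
    rintro _ ⟨y, hy, rfl⟩
    show dist t y ≤ _
    calc dist t y ≤ dist t t' + dist t' y := dist_triangle _ _ _
      _ ≤ dist t t' + f t' := by gcongr; exact le_csSup (hbdd t') ⟨y, hy, rfl⟩
      _ = f t' + dist t t' := add_comm _ _
  have hcont : Continuous f := by
    apply LipschitzWith.continuous (K := 1)
    apply LipschitzWith.of_dist_le_mul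
    intro t t'
    rw [NNReal.coe_one, one_mul, Real.dist_eq, abs_sub_le_iff]
    constructor
    · linarith [hlip t t']
    · linarith [hlip t' t, dist_comm t t']
  obtain ⟨t₀, ht₀C, ht₀min⟩ := (isCompact_closedBall y₀ (f y₀)).exists_isMinOn
    ⟨y₀, mem_closedBall_self (hf0 y₀)⟩ hcont.continuousOn
  have hmin : ∀ t, f t₀ ≤ f t := by
    intro t
    by_cases ht : t ∈ closedBall y₀ (f y₀)
    · exact ht₀min ht
    · have h1 : f y₀ < dist t y₀ := by
        rw [mem_closedBall, dist_comm] at ht; push_neg at ht; rwa [dist_comm]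
      have h2 : dist t y₀ ≤ f t := le_csSup (hbdd t) ⟨y₀, hy₀, rfl⟩
      have h3 : f t₀ ≤ f y₀ := ht₀min (mem_closedBall_self (hf0 y₀))
      linarith
  have hmem : f t₀ ∈ {ρ : ℝ | 0 ≤ ρ ∧ ∃ t, K ⊆ closedBall t ρ} :=
    ⟨hf0 t₀, t₀, (hfle t₀ (f t₀)).2 le_rfl⟩
  have heq : circumrad d K = f t₀ := by
    apply le_antisymm
    · exact csInf_le ⟨0, fun ρ hρ => hρ.1⟩ hmem
    · apply le_csInf ⟨f t₀, hmem⟩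
      rintro ρ ⟨hρ0, t, hsub⟩
      exact le_trans (hmin t) ((hfle t ρ).1 hsub)
  rw [heq]
  exact ⟨hf0 t₀, t₀, (hfle t₀ (f t₀)).2 le_rfl⟩

lemma aux14_circumrad_closedBall (hd : 1 ≤ d) (c : EuclideanSpace ℝ (Fin d)) {r : ℝ} (hr : 0 ≤ r) :
    circumrad d (closedBall c r) = r := by
  apply le_antisymm
  · exact csInf_le ⟨0, fun ρ hρ => hρ.1⟩ ⟨hr, c, subset_refl _⟩
  · have hmem : r ∈ {ρ : ℝ | 0 ≤ ρ ∧ ∃ t, closedBall c r ⊆ closedBall t ρ} :=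
      ⟨hr, c, subset_refl _⟩
    apply le_csInf ⟨r, hmem⟩
    rintro ρ ⟨hρ0, t, hsub⟩
    set e : EuclideanSpace ℝ (Fin d) := EuclideanSpace.single (⟨0, hd⟩ : Fin d) (1 : ℝ) with he
    have hnorme : ‖e‖ = 1 := by rw [he, EuclideanSpace.norm_single, norm_one]
    have h1 : c + r • e ∈ closedBall c r := by
      simp [dist_eq_norm, norm_smul, hnorme, abs_of_nonneg hr]
    have h2 : c - r • e ∈ closedBall c r := by
      simp [dist_eq_norm, norm_smul, hnorme, abs_of_nonneg hr, sub_eq_add_neg]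
    have h3 : dist (c + r • e) (c - r • e) = 2 * r := by
      rw [dist_eq_norm]
      have : c + r • e - (c - r • e) = (2 * r) • e := by
        rw [two_mul, add_smul]; abel
      rw [this, norm_smul, hnorme, mul_one, Real.norm_eq_abs, abs_of_nonneg (by linarith)]
    have h4 := dist_triangle (c + r • e) t (c - r • e)
    have h5 := hsub h1
    have h6 := hsub h2
    rw [mem_closedBall] at h5 h6
    rw [dist_comm (c - r • e) t] at h6
    linarith

lemma aux14_nontrivial_E (hd : 1 ≤ d) : Nontrivial (EuclideanSpace ℝ (Fin d)) := by
  refine ⟨0, EuclideanSpace.single (⟨0, hd⟩ : Fin d) (1 : ℝ), ?_⟩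
  intro h
  have := congrArg norm h
  rw [norm_zero, EuclideanSpace.norm_single, norm_one] at this
  norm_num at this

lemma aux14_integral_norm_closedBall (hd : 1 ≤ d) :
    ∫ x in closedBall (0 : EuclideanSpace ℝ (Fin d)) 1, ‖x‖ =
      ((d : ℝ) / (d + 1)) * unitBallVol d := by
  haveI := aux14_nontrivial_E hd
  have hdim : Module.finrank ℝ (EuclideanSpace ℝ (Fin d)) = d := finrank_euclideanSpace_fin
  have aux14_key := MeasureTheory.integral_fun_norm_addHaar
    (volume : Measure (EuclideanSpace ℝ (Fin d))) (Set.indicator (Icc (0:ℝ) 1) id)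
  rw [hdim] at aux14_key
  have h1 : (fun x : EuclideanSpace ℝ (Fin d) => Set.indicator (Icc (0:ℝ) 1) id ‖x‖) =
      Set.indicator (closedBall (0 : EuclideanSpace ℝ (Fin d)) 1) (fun x => ‖x‖) := by
    funext x
    by_cases h : ‖x‖ ≤ 1
    · rw [Set.indicator_of_mem (Set.mem_Icc.mpr ⟨norm_nonneg x, h⟩),
        Set.indicator_of_mem (by rwa [mem_closedBall, dist_zero_right])]
      rfl
    · rw [Set.indicator_of_notMem (fun hm => h hm.2),
        Set.indicator_of_notMem (by rwa [mem_closedBall, dist_zero_right])]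
  have h2 : ∫ y in Ioi (0:ℝ), y ^ (d - 1) • Set.indicator (Icc (0:ℝ) 1) id y
      = 1 / (d + 1) := by
    have hcongr : ∀ y ∈ Ioi (0:ℝ), y ^ (d - 1) • Set.indicator (Icc (0:ℝ) 1) id y =
        Set.indicator (Ioc (0:ℝ) 1) (fun y => y ^ d) y := by
      intro y hy
      rw [mem_Ioi] at hy
      by_cases h : y ≤ 1
      · rw [Set.indicator_of_mem (Set.mem_Icc.mpr ⟨hy.le, h⟩),
          Set.indicator_of_mem (Set.mem_Ioc.mpr ⟨hy, h⟩), smul_eq_mul, id]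
        rw [← pow_succ, Nat.sub_add_cancel hd]
      · rw [Set.indicator_of_notMem (fun hm => h hm.2),
          Set.indicator_of_notMem (fun hm => h hm.2), smul_zero]
    rw [setIntegral_congr_fun measurableSet_Ioi hcongr, integral_indicator measurableSet_Ioc,
      Measure.restrict_restrict measurableSet_Ioc,
      Set.inter_eq_self_of_subset_left Ioc_subset_Ioi_self,
      ← intervalIntegral.integral_of_le zero_le_one, integral_pow]
    simp
  rw [h1, integral_indicator measurableSet_closedBall, h2] at aux14_key
  rw [aux14_key, nsmul_eq_mul, smul_eq_mul, unitBallVol,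
    measureReal_def, ← Measure.addHaar_closedBall_eq_addHaar_ball]
  ring

lemma aux14_integral_inner_closedBall (c : EuclideanSpace ℝ (Fin d)) :
    ∫ x in closedBall (0 : EuclideanSpace ℝ (Fin d)) 1, (inner ℝ x c : ℝ) = 0 := by
  set B := closedBall (0 : EuclideanSpace ℝ (Fin d)) 1 with hB
  set g : EuclideanSpace ℝ (Fin d) → ℝ := fun x => (inner ℝ x c : ℝ) with hg
  have h0 : ∫ x in B, g x = ∫ x, Set.indicator B g x :=
    (integral_indicator measurableSet_closedBall).symm
  have hneg : ∀ x, Set.indicator B g (-x) = - Set.indicator B g x := by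
    intro x
    by_cases h : x ∈ B
    · have h' : -x ∈ B := by
        rwa [hB, mem_closedBall, dist_zero_right, norm_neg, ← dist_zero_right, ← mem_closedBall]
      rw [Set.indicator_of_mem h' , Set.indicator_of_mem h, hg]
      simp [inner_neg_left]
    · have h' : -x ∉ B := by
        simp only [hB, mem_closedBall, dist_zero_right, norm_neg] at *
        exact h
      rw [Set.indicator_of_notMem h', Set.indicator_of_notMem h, neg_zero]
  have h3 : ∫ x, Set.indicator B g x = - ∫ x, Set.indicator B g x := by
    conv_lhs => rw [← MeasureTheory.integral_neg_eq_self (Set.indicator B g) volume]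
    simp_rw [hneg]
    rw [integral_neg]
  rw [h0]
  linarith [h3]

lemma aux14_integrableOn_ball_inner_add (t : EuclideanSpace ℝ (Fin d)) (R : ℝ) :
    MeasureTheory.IntegrableOn (fun x : EuclideanSpace ℝ (Fin d) => (inner ℝ x t : ℝ) + R * ‖x‖)
      (closedBall (0 : EuclideanSpace ℝ (Fin d)) 1) volume := by
  apply ContinuousOn.integrableOn_compact (isCompact_closedBall _ _)
  exact ((continuous_id.inner continuous_const).add
    (continuous_const.mul continuous_norm)).continuousOn

lemma aux14_integral_inner_add_norm (hd : 1 ≤ d) (t : EuclideanSpace ℝ (Fin d)) (R : ℝ) :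
    ∫ x in closedBall (0 : EuclideanSpace ℝ (Fin d)) 1, ((inner ℝ x t : ℝ) + R * ‖x‖) =
      R * (((d : ℝ) / (d + 1)) * unitBallVol d) := by
  have hi1 : MeasureTheory.IntegrableOn (fun x : EuclideanSpace ℝ (Fin d) => (inner ℝ x t : ℝ))
      (closedBall (0 : EuclideanSpace ℝ (Fin d)) 1) volume :=
    ContinuousOn.integrableOn_compact (isCompact_closedBall _ _)
      (continuous_id.inner continuous_const).continuousOn
  have hi2 : MeasureTheory.IntegrableOn (fun x : EuclideanSpace ℝ (Fin d) => R * ‖x‖)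
      (closedBall (0 : EuclideanSpace ℝ (Fin d)) 1) volume :=
    ContinuousOn.integrableOn_compact (isCompact_closedBall _ _)
      (continuous_const.mul continuous_norm).continuousOn
  rw [MeasureTheory.integral_add hi1 hi2, aux14_integral_inner_closedBall,
    MeasureTheory.integral_const_mul, aux14_integral_norm_closedBall hd]
  ring


lemma aux14_norm_le_of_mem_ball {t : EuclideanSpace ℝ (Fin d)} {R : ℝ}
    {y : EuclideanSpace ℝ (Fin d)} (hy : y ∈ closedBall t R) : ‖y‖ ≤ ‖t‖ + R := by
  have h : ‖y - t‖ ≤ R := by rw [← dist_eq_norm]; exact mem_closedBall.1 hy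
  calc ‖y‖ = ‖(y - t) + t‖ := by congr 1; abel
    _ ≤ ‖y - t‖ + ‖t‖ := norm_add_le _ _
    _ ≤ R + ‖t‖ := by gcongr
    _ = ‖t‖ + R := add_comm _ _

lemma aux14_unitBallVol_pos (n : ℕ) : 0 < unitBallVol n := by
  rw [unitBallVol]
  apply ENNReal.toReal_pos
  · exact (measure_closedBall_pos MeasureTheory.volume 0 one_pos).ne'
  · exact measure_closedBall_lt_top.ne

lemma aux14_quermass_closedBall (hd : 1 ≤ d) (c : EuclideanSpace ℝ (Fin d)) {r : ℝ} (hr : 0 ≤ r) :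
    quermass d (closedBall c r) = unitBallVol d * r := by
  have hdpos : (0:ℝ) < d := by exact_mod_cast hd
  rw [quermass, MeasureTheory.setIntegral_congr_fun measurableSet_closedBall
    (fun x _ => aux14_suppFn_closedBall c hr x), aux14_integral_inner_add_norm hd c r]
  field_simp

lemma aux14_key (hd : 1 ≤ d) (hne : K.Nonempty) (hcp : IsCompact K) (hcv : Convex ℝ K)
    {t : EuclideanSpace ℝ (Fin d)} {R : ℝ} (hR : 0 ≤ R) (hsub : K ⊆ closedBall t R) :
    quermass d K ≤ unitBallVol d * R ∧
      (quermass d K = unitBallVol d * R → K = closedBall t R) := by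
  have hdpos : (0:ℝ) < d := by exact_mod_cast hd
  set B := closedBall (0 : EuclideanSpace ℝ (Fin d)) 1 with hB
  set g : EuclideanSpace ℝ (Fin d) → ℝ := fun x => (inner ℝ x t : ℝ) + R * ‖x‖ with hg
  have hM : ∀ y ∈ K, ‖y‖ ≤ ‖t‖ + R := fun y hy => aux14_norm_le_of_mem_ball (hsub hy)
  have hconth : Continuous (suppFn d K) := (aux14_suppFn_lipschitz hne hM).continuous
  have hcontg : Continuous g :=
    (continuous_id.inner continuous_const).add (continuous_const.mul continuous_norm)
  have hInth : MeasureTheory.IntegrableOn (suppFn d K) B :=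
    ContinuousOn.integrableOn_compact (isCompact_closedBall _ _) hconth.continuousOn
  have hIntg : MeasureTheory.IntegrableOn g B := aux14_integrableOn_ball_inner_add t R
  have hle : ∀ x, suppFn d K x ≤ g x := aux14_suppFn_le_of_subset_ball hne hsub
  have hmono : ∫ x in B, suppFn d K x ≤ ∫ x in B, g x :=
    MeasureTheory.setIntegral_mono_on hInth hIntg measurableSet_closedBall fun x _ => hle x
  have hIg : ∫ x in B, g x = R * (((d : ℝ) / (d + 1)) * unitBallVol d) :=
    aux14_integral_inner_add_norm hd t R
  have halg : ((d + 1 : ℝ) / d) * (R * (((d : ℝ) / (d + 1)) * unitBallVol d))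
      = unitBallVol d * R := by
    field_simp
  constructor
  · rw [quermass, ← halg, ← hIg]
    apply mul_le_mul_of_nonneg_left hmono
    positivity
  · intro heq
    have hfac : (0:ℝ) < (d + 1 : ℝ) / d := by positivity
    have hint_eq : ∫ x in B, suppFn d K x = ∫ x in B, g x := by
      apply mul_left_cancel₀ hfac.ne'
      rw [hIg, halg]
      exact heq
    have hzero : ∫ x in B, (g x - suppFn d K x) = 0 := by
      rw [MeasureTheory.integral_sub hIntg hInth, hint_eq, sub_self]
    have haezero : (fun x => g x - suppFn d K x) =ᵐ[MeasureTheory.volume.restrict B] 0 :=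
      (MeasureTheory.integral_eq_zero_iff_of_nonneg (fun x => sub_nonneg.2 (hle x))
        (hIntg.sub hInth)).1 hzero
    have haeeq : suppFn d K =ᵐ[MeasureTheory.volume.restrict B] g := by
      filter_upwards [haezero] with x hx
      have : g x - suppFn d K x = 0 := hx
      linarith
    have hEq : EqOn (suppFn d K) g B := by
      apply MeasureTheory.Measure.eqOn_of_ae_eq haeeq hconth.continuousOn hcontg.continuousOn
      rw [hB, interior_closedBall _ one_ne_zero, closure_ball _ one_ne_zero]
    have hall : ∀ x, suppFn d K x = g x := by
      intro x
      set c : ℝ := ‖x‖ + 1 with hc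
      have hcpos : 0 < c := by positivity
      have hmem : c⁻¹ • x ∈ B := by
        rw [hB, mem_closedBall, dist_zero_right, norm_smul, Real.norm_eq_abs,
          abs_of_pos (inv_pos.2 hcpos)]
        rw [inv_mul_le_iff₀ hcpos, mul_one, hc]
        linarith
      have hxx : c • (c⁻¹ • x) = x := by rw [smul_smul, mul_inv_cancel₀ hcpos.ne', one_smul]
      have h1 : suppFn d K x = c * suppFn d K (c⁻¹ • x) := by
        conv_lhs => rw [← hxx]
        exact aux14_suppFn_smul hne hM hcpos _
      rw [h1, hEq hmem, hg]
      simp only [real_inner_smul_left, norm_smul, Real.norm_eq_abs,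
        abs_of_pos (inv_pos.2 hcpos)]
      field_simp
    apply Subset.antisymm hsub
    intro p hp
    apply aux14_mem_of_forall_inner_le hcp hcv hne
    intro x
    have hpb : (inner ℝ x p : ℝ) ≤ suppFn d (closedBall t R) x :=
      aux14_le_suppFn x (aux14_bddAbove_inner_image (fun y hy => aux14_norm_le_of_mem_ball hy) x) hp
    rw [aux14_suppFn_closedBall t hR x] at hpb
    rw [hall x]
    exact hpb

end StmtAux

theorem stmt14 (d : ℕ) (hd : 1 ≤ d) (K : Set (EuclideanSpace ℝ (Fin d)))
    (hne : K.Nonempty) (hcp : IsCompact K) (hcv : Convex ℝ K) :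
    ((d : ℝ) / unitBallVol (d - 1)) * quermass d K ≤
        (d * unitBallVol d / unitBallVol (d - 1)) * circumrad d K ∧
    unitBallVol d * circumrad d K ≥ quermass d K ∧
    (¬ (∃ p, K = {p}) →
      (unitBallVol d * circumrad d K = quermass d K ↔
        ∃ (c : EuclideanSpace ℝ (Fin d)) (r : ℝ), 0 < r ∧ K = closedBall c r)) := by
  obtain ⟨hR0, t₀, hsub⟩ := aux14_exists_circumcenter hne hcp
  obtain ⟨hle, heqcase⟩ := aux14_key hd hne hcp hcv hR0 hsub
  have hκ' : 0 < unitBallVol (d - 1) := aux14_unitBallVol_pos (d - 1)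
  refine ⟨?_, hle, ?_⟩
  · calc ((d : ℝ) / unitBallVol (d - 1)) * quermass d K
        ≤ ((d : ℝ) / unitBallVol (d - 1)) * (unitBallVol d * circumrad d K) := by
          apply mul_le_mul_of_nonneg_left hle
          positivity
      _ = (d * unitBallVol d / unitBallVol (d - 1)) * circumrad d K := by ring
  · intro hns
    constructor
    · intro heq
      have hKball : K = closedBall t₀ (circumrad d K) := heqcase heq.symm
      refine ⟨t₀, circumrad d K, ?_, hKball⟩
      rcases hR0.lt_or_eq with h | h
      · exact h
      · exfalso
        apply hns
        have hball0 : closedBall t₀ (circumrad d K) = {t₀} := by rw [← h]; exact closedBall_zero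
        have hsub' : K ⊆ {t₀} := hball0 ▸ hsub
        rcases (Set.subset_singleton_iff_eq).1 hsub' with h' | h'
        · exact absurd h' hne.ne_empty
        · exact ⟨t₀, h'⟩
    · rintro ⟨c, r, hrpos, rfl⟩
      rw [aux14_circumrad_closedBall hd c hrpos.le, aux14_quermass_closedBall hd c hrpos.le]
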